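/- arXiv:2505.15321 — 4 statements merged into one kernel-verified Lean document; each statement's English description precedes it below -/
import Mathlib

section
/- A minimal system {x_k} in a separable Hilbert space H with biorthogonal system {x_k*} is hereditarily complete if and only if for every partition of the natural numbers into disjoint sets N1 and N2, the mixed system {x_k : k in N1} ∪ {x_k* : k in N2} is complete in H. -/
/-!
Write `K_N` for the closed span of `{x_k : k ∈ N}`; biorthogonality puts every `x_k^*` with
`k ∉ N` into `K_Nᗮ`. The closed span of `{(z, x_k^*) x_k}` is `K_N` for `N` the support of the
coefficients of `z`. Hence, if every `z` lies in the closed span of its coefficient system, a vector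
orthogonal to the mixed system for `N` lies both in `K_N` (its coefficients vanish off `N`) and in
`K_Nᗮ`, so it is zero. Conversely, for `N` the support of the coefficients of `z`, the component of
`z` in `K_Nᗮ` is orthogonal to the whole mixed system for `N`, so it vanishes and `z ∈ K_N`.
-/

open Filter Topology

noncomputable section

variable {H : Type*} [NormedAddCommGroup H] [InnerProductSpace ℂ H] [CompleteSpace H]

/-- Closed linear span of a set of vectors. -/
def clSpan (s : Set H) : Submodule ℂ H := (Submodule.span ℂ s).topologicalClosure

instance (s : Set H) : CompleteSpace (clSpan s) :=
  (Submodule.isClosed_topologicalClosure _).completeSpace_coe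

/-- Orthogonal projection onto the closed linear span of `s`, as a map `H → H`. -/
def projS (s : Set H) : H →L[ℂ] H :=
  (clSpan s).subtypeL ∘L (clSpan s).orthogonalProjectionOnto

/-- The system `x` is complete: its closed linear span is all of `H`. -/
def IsCompleteSystem (x : ℕ → H) : Prop := clSpan (Set.range x) = ⊤

/-- The system `x` is minimal: no vector lies in the closed span of the others. -/
def IsMinimalSystem (x : ℕ → H) : Prop :=
  ∀ k, x k ∉ clSpan (x '' {j | j ≠ k})

/-- `y` is biorthogonal to `x`. -/
def IsBiorthogonal (x y : ℕ → H) : Prop :=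
  ∀ k j, (inner ℂ (x k) (y j) : ℂ) = if k = j then 1 else 0

section

variable {E : Type*} [NormedAddCommGroup E] [InnerProductSpace ℂ E]

lemma mem_orthogonal_span_iff {s : Set E} {v : E} :
    v ∈ (Submodule.span ℂ s)ᗮ ↔ ∀ u ∈ s, (inner ℂ u v : ℂ) = 0 := by
  rw [← Submodule.span_singleton_le_iff_mem, ← Submodule.isOrtho_iff_le, Submodule.isOrtho_comm,
    Submodule.isOrtho_span]
  simp

lemma mem_orthogonal_clSpan_iff {s : Set E} {v : E} :
    v ∈ (clSpan s)ᗮ ↔ ∀ u ∈ s, (inner ℂ u v : ℂ) = 0 := by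
  rw [clSpan, Submodule.orthogonal_closure, mem_orthogonal_span_iff]

lemma clSpan_eq_top_iff [CompleteSpace E] {s : Set E} :
    clSpan s = ⊤ ↔ ∀ v, (∀ u ∈ s, (inner ℂ u v : ℂ) = 0) → v = 0 := by
  simp_rw [clSpan, Submodule.topologicalClosure_eq_top_iff, Submodule.eq_bot_iff,
    mem_orthogonal_span_iff]

lemma clSpan_mono {s t : Set E} (h : s ⊆ t) : clSpan s ≤ clSpan t :=
  Submodule.topologicalClosure_mono (Submodule.span_mono h)

lemma span_range_smul {ι : Type*} (c : ι → ℂ) (x : ι → E) :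
    Submodule.span ℂ (Set.range fun k => c k • x k) = Submodule.span ℂ (x '' {k | c k ≠ 0}) := by
  apply le_antisymm <;> rw [Submodule.span_le]
  · rintro - ⟨k, rfl⟩
    by_cases hk : c k = 0
    · simp [hk]
    · exact Submodule.smul_mem _ _ (Submodule.subset_span ⟨k, hk, rfl⟩)
  · rintro - ⟨k, hk, rfl⟩
    rw [← inv_smul_smul₀ hk (x k)]
    exact Submodule.smul_mem _ _ (Submodule.subset_span ⟨k, rfl⟩)

lemma clSpan_range_smul {ι : Type*} (c : ι → ℂ) (x : ι → E) :
    clSpan (Set.range fun k => c k • x k) = clSpan (x '' {k | c k ≠ 0}) := by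
  rw [clSpan, span_range_smul, clSpan]

/-- The vectors of `t` span a dense subspace of `Kᗮ`, so a vector orthogonal to `t` has no
component in `Kᗮ`. -/
lemma mem_of_forall_inner_eq_zero {K : Submodule ℂ E} [K.HasOrthogonalProjection] {t : Set E}
    (ht : t ⊆ Kᗮ) (hdense : ∀ v ∈ Kᗮ, (∀ u ∈ t, (inner ℂ u v : ℂ) = 0) → v = 0) {z : E}
    (hz : ∀ u ∈ t, (inner ℂ u z : ℂ) = 0) : z ∈ K := by
  have hzK : z - K.starProjection z = 0 := by
    refine hdense _ (K.sub_starProjection_mem_orthogonal z) fun u hu => ?_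
    rw [inner_sub_right, hz u hu,
      Submodule.inner_left_of_mem_orthogonal (K.starProjection_apply_mem z) (ht hu), sub_zero]
  rw [← K.starProjection_eq_self_iff, ← sub_eq_zero.1 hzK]

lemma IsBiorthogonal.mem_orthogonal_clSpan_image {x y : ℕ → E} (hbi : IsBiorthogonal x y)
    {N : Set ℕ} {k : ℕ} (hk : k ∉ N) : y k ∈ (clSpan (x '' N))ᗮ := by
  rw [mem_orthogonal_clSpan_iff]
  rintro - ⟨j, hj, rfl⟩
  have hjk : j ≠ k := fun h => hk (h ▸ hj)
  simpa [hjk] using hbi j k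

end

theorem hereditarily_complete_iff_mixed_complete_general
    (x y : ℕ → H) (hbi : IsBiorthogonal x y) :
    (IsCompleteSystem x ∧
      ∀ z : H, z ∈ clSpan (Set.range fun k => (inner ℂ (y k) z : ℂ) • x k)) ↔
      ∀ N : Set ℕ, clSpan (x '' N ∪ y '' Nᶜ) = ⊤ := by
  simp_rw [clSpan_range_smul]
  constructor
  · rintro ⟨-, hher⟩ N
    refine clSpan_eq_top_iff.2 fun h hh => ?_
    have horth : h ∈ (clSpan (x '' N))ᗮ :=
      mem_orthogonal_clSpan_iff.2 fun u hu => hh u (Or.inl hu)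
    have hsupp : {k | (inner ℂ (y k) h : ℂ) ≠ 0} ⊆ N := fun k hk =>
      by_contra fun hkN => hk (hh _ (Or.inr ⟨k, hkN, rfl⟩))
    have hmem : h ∈ clSpan (x '' N) := clSpan_mono (Set.image_mono hsupp) (hher h)
    exact inner_self_eq_zero.1 (Submodule.inner_right_of_mem_orthogonal hmem horth)
  · intro hmix
    refine ⟨by simpa [IsCompleteSystem] using hmix Set.univ, fun z => ?_⟩
    set N := {k | (inner ℂ (y k) z : ℂ) ≠ 0}
    refine mem_of_forall_inner_eq_zero (t := y '' Nᶜ) ?_ ?_ ?_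
    · rintro - ⟨k, hk, rfl⟩
      exact hbi.mem_orthogonal_clSpan_image hk
    · intro v hv hvy
      refine clSpan_eq_top_iff.1 (hmix N) v ?_
      rintro u (hu | hu)
      exacts [mem_orthogonal_clSpan_iff.1 hv u hu, hvy u hu]
    · rintro - ⟨k, hk, rfl⟩
      simpa [N] using hk

/-- A minimal system with biorthogonal system `y` is hereditarily complete (it is complete and
every vector lies in the closed span of `(x, x_k^*) x_k`) iff every mixed system
`{x_k}_{k ∈ N₁} ∪ {x_k^*}_{k ∈ N₂}` (for a partition `ℕ = N₁ ⊔ N₂`) is complete. -/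
theorem hereditarily_complete_iff_mixed_complete
    [TopologicalSpace.SeparableSpace H]
    (x y : ℕ → H) (hmin : IsMinimalSystem x) (hbi : IsBiorthogonal x y) :
    (IsCompleteSystem x ∧
      ∀ z : H, z ∈ clSpan (Set.range fun k => (inner ℂ (y k) z : ℂ) • x k)) ↔
      ∀ N : Set ℕ, clSpan (x '' N ∪ y '' Nᶜ) = ⊤ :=
  hereditarily_complete_iff_mixed_complete_general x y hbi
end
end

section
/- Let {x_k} be a system with biorthogonal system {x_k*}, let ℕ = N1 ⊔ N2 be a partition, and let k0 ∈ N2. If the orthogonal complement of the closed linear span of {x_k}_{k∈N1} ∪ {x_k*}_{k∈N2} has dimension m (possibly infinite), then the orthogonal complement of the closed linear span of {x_k}_{k∈N1∪{k0}} ∪ {x_k*}_{k∈N2∖{k0}} also has dimension m. -/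
open Filter Topology

noncomputable section

variable {H : Type*} [NormedAddCommGroup H] [InnerProductSpace ℂ H] [CompleteSpace H]

/-!
Let `W` be the orthogonal complement of the closed span of the common part
`{x k}_{k ∈ N₁} ∪ {y k}_{k ∈ N₂ \ {k₀}}`. The two defects are the ranks of `W ⊓ (ℂ ∙ y k₀)ᗮ` and
`W ⊓ (ℂ ∙ x k₀)ᗮ`, and both are hyperplanes of `W`: subtracting from `x k₀` its projection onto
the closed span of `{x k}_{k ∈ N₁}` gives a vector of `W` whose inner product with `y k₀` is
`1`, and symmetrically for `y k₀`. Hence both ranks satisfy `r + 1 = rank W`, and `1` cancels.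
-/

namespace Submodule

variable {𝕜 E : Type*} [RCLike 𝕜] [NormedAddCommGroup E] [InnerProductSpace 𝕜 E]

theorem rank_inf_orthogonal_span_singleton_add_one {W : Submodule 𝕜 E} {z : E} (hz : z ∉ Wᗮ) :
    Module.rank 𝕜 ↥(W ⊓ (𝕜 ∙ z)ᗮ) + 1 = Module.rank 𝕜 W := by
  set f : Module.Dual 𝕜 W := (innerₛₗ 𝕜 z).comp W.subtype
  have hf : f ≠ 0 := by
    contrapose! hz
    refine (mem_orthogonal' W z).2 fun u hu => ?_
    simpa [f] using LinearMap.congr_fun hz ⟨u, hu⟩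
  have hker : LinearMap.ker f = comap W.subtype (W ⊓ (𝕜 ∙ z)ᗮ) := by
    ext u
    simp [f, mem_orthogonal_singleton_iff_inner_right]
  have hrank := f.lift_rank_range_add_rank_ker
  rw [Module.Dual.range_eq_top_of_ne_zero hf, hker, (comapSubtypeEquivOfLe inf_le_left).rank_eq,
    rank_top, Module.rank_self, Cardinal.lift_one, add_comm] at hrank
  exact Cardinal.lift_injective (by simpa using hrank)

theorem notMem_orthogonal_inf_orthogonal [CompleteSpace E] {K L : Submodule 𝕜 E} (hLK : L ⟂ K)
    {a b : E} (ha : a ∈ Lᗮ) (hb : b ∈ Kᗮ) (hab : inner 𝕜 a b ≠ 0) : b ∉ (Kᗮ ⊓ Lᗮ)ᗮ := by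
  set K' := K.topologicalClosure
  have : CompleteSpace K' := K.isClosed_topologicalClosure.completeSpace_coe
  rw [← orthogonal_closure K] at hb ⊢
  have hPa : K'.starProjection a ∈ K' := K'.starProjection_apply_mem a
  have hK'L : K' ≤ Lᗮ := K.topologicalClosure_minimal hLK.symm L.isClosed_orthogonal
  have hv : a - K'.starProjection a ∈ K'ᗮ ⊓ Lᗮ :=
    ⟨K'.sub_starProjection_mem_orthogonal a, sub_mem ha (hK'L hPa)⟩
  intro hmem
  apply hab
  simpa [inner_sub_left, inner_right_of_mem_orthogonal hPa hb] using
    inner_right_of_mem_orthogonal hv hmem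

end Submodule

open Submodule

theorem orthogonal_clSpan_union {E : Type*} [NormedAddCommGroup E] [InnerProductSpace ℂ E]
    (s t : Set E) : (clSpan (s ∪ t))ᗮ = (span ℂ s)ᗮ ⊓ (span ℂ t)ᗮ := by
  rw [clSpan, orthogonal_closure, span_union, inf_orthogonal]

theorem IsBiorthogonal.isOrtho_span_image {E : Type*} [NormedAddCommGroup E]
    [InnerProductSpace ℂ E] {x y : ℕ → E} (hbi : IsBiorthogonal x y) {I J : Set ℕ}
    (hIJ : Disjoint I J) : span ℂ (x '' I) ⟂ span ℂ (y '' J) := by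
  refine isOrtho_span.2 ?_
  rintro _ ⟨i, hi, rfl⟩ _ ⟨j, hj, rfl⟩
  rw [hbi i j, if_neg (hIJ.ne_of_mem hi hj)]

theorem defect_invariant_under_swap_general
    (x y : ℕ → H) (hbi : IsBiorthogonal x y)
    (N₁ N₂ : Set ℕ) (hdisj : Disjoint N₁ N₂)
    (k₀ : ℕ) (hk₀ : k₀ ∈ N₂) (m : Cardinal)
    (hm : Module.rank ℂ ↥((clSpan (x '' N₁ ∪ y '' N₂))ᗮ) = m) :
    Module.rank ℂ ↥((clSpan (x '' (N₁ ∪ {k₀}) ∪ y '' (N₂ \ {k₀})))ᗮ) = m := by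
  set s₁ := x '' N₁
  set s₂ := y '' (N₂ \ {k₀})
  have h₁₂ : span ℂ s₁ ⟂ span ℂ s₂ := hbi.isOrtho_span_image (hdisj.mono_right Set.sdiff_subset)
  have hx : x k₀ ∈ (span ℂ s₂)ᗮ :=
    hbi.isOrtho_span_image (I := {k₀}) Set.disjoint_sdiff_right (subset_span (by simp))
  have hy : y k₀ ∈ (span ℂ s₁)ᗮ :=
    (hbi.isOrtho_span_image (J := {k₀})
      (Set.disjoint_singleton_right.2 (hdisj.notMem_of_mem_right hk₀))).symm
      (subset_span (by simp))
  have hxy : inner ℂ (x k₀) (y k₀) = (1 : ℂ) := by simp [hbi k₀ k₀]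
  have hy_notMem : y k₀ ∉ ((span ℂ s₁)ᗮ ⊓ (span ℂ s₂)ᗮ)ᗮ :=
    notMem_orthogonal_inf_orthogonal h₁₂.symm hx hy (by simp [hxy])
  have hx_notMem : x k₀ ∉ ((span ℂ s₁)ᗮ ⊓ (span ℂ s₂)ᗮ)ᗮ := by
    rw [inf_comm]
    exact notMem_orthogonal_inf_orthogonal h₁₂ hy hx (by simp [inner_eq_zero_symm, hxy])
  have hN₂ : y '' N₂ = s₂ ∪ {y k₀} := by
    rw [← Set.image_singleton, ← Set.image_union, Set.sdiff_union_of_subset (by simpa using hk₀)]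
  rw [hN₂, ← Set.union_assoc, orthogonal_clSpan_union, span_union, ← inf_orthogonal] at hm
  rw [Set.image_union, Set.image_singleton, Set.union_right_comm, orthogonal_clSpan_union,
    span_union, ← inf_orthogonal]
  refine Cardinal.eq_of_add_eq_add_right ?_ Cardinal.one_lt_aleph0
  rw [rank_inf_orthogonal_span_singleton_add_one hx_notMem, ← hm,
    rank_inf_orthogonal_span_singleton_add_one hy_notMem]

/-- Vector replacement: moving one index `k₀` from `N₂` to `N₁` does not change the defect
(the dimension of the orthogonal complement of the closed span of the mixed system). -/
theorem defect_invariant_under_swap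
    (x y : ℕ → H) (hbi : IsBiorthogonal x y)
    (N₁ N₂ : Set ℕ) (hdisj : Disjoint N₁ N₂) (hunion : N₁ ∪ N₂ = Set.univ)
    (k₀ : ℕ) (hk₀ : k₀ ∈ N₂) (m : Cardinal)
    (hm : Module.rank ℂ ↥((clSpan (x '' N₁ ∪ y '' N₂))ᗮ) = m) :
    Module.rank ℂ ↥((clSpan (x '' (N₁ ∪ {k₀}) ∪ y '' (N₂ \ {k₀})))ᗮ) = m :=
  defect_invariant_under_swap_general x y hbi N₁ N₂ hdisj k₀ hk₀ m hm
end
end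

section
/- For a normalized complete minimal system {x_k}, the function σ ↦ d_s(P_σ, 0) = Σ_j ‖P_σ x_j‖/2^j is lower semicontinuous on 𝔓(ℕ) with the product topology. -/
/-! For `c < ‖P_σ v‖` one can approximate `P_σ v` by a vector `z` in the span of finitely many
`x_k`, `k ∈ σ`, with `c ‖z‖ < |⟪v, z⟫|`. For every `τ` containing those finitely many indices,
which is an open condition in the product topology, `|⟪v, z⟫| ≤ ‖P_τ v‖ ‖z‖`, so `c < ‖P_τ v‖`.
Hence every term of the series is lower semicontinuous, and so is the sum of these nonnegative
terms, which is dominated by `∑ 2⁻ʲ`. -/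

open Filter Topology

noncomputable section

variable {H : Type*} [NormedAddCommGroup H] [InnerProductSpace ℂ H] [CompleteSpace H]

open scoped InnerProductSpace

lemma projS_eq_starProjection (s : Set H) : projS s = (clSpan s).starProjection := rfl

lemma norm_projS_apply_le (s : Set H) (v : H) : ‖projS s v‖ ≤ ‖v‖ :=
  ((clSpan s).starProjection.le_opNorm v).trans
    (mul_le_of_le_one_left (norm_nonneg v) (clSpan s).starProjection_norm_le)

lemma inner_projS_apply_of_mem {s : Set H} (v : H) {z : H} (hz : z ∈ clSpan s) :
    ⟪projS s v, z⟫_ℂ = ⟪v, z⟫_ℂ := by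
  rw [projS_eq_starProjection, Submodule.inner_starProjection_left_eq_right,
    Submodule.starProjection_eq_self_iff.mpr hz]

lemma norm_inner_le_norm_projS_mul {s : Set H} (v : H) {z : H} (hz : z ∈ clSpan s) :
    ‖⟪v, z⟫_ℂ‖ ≤ ‖projS s v‖ * ‖z‖ :=
  inner_projS_apply_of_mem v hz ▸ norm_inner_le_norm _ _

lemma exists_mem_span_mul_norm_lt_norm_inner {s : Set H} {v : H} {c : ℝ} (hc : 0 ≤ c)
    (h : c < ‖projS s v‖) : ∃ z ∈ Submodule.span ℂ s, c * ‖z‖ < ‖⟪v, z⟫_ℂ‖ := by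
  set p := projS s v
  have hp_mem : p ∈ clSpan s := (clSpan s).starProjection_apply_mem v
  have hp : p ∈ closure (Submodule.span ℂ s : Set H) := by
    rwa [← Submodule.topologicalClosure_coe]
  have hpU : c * ‖p‖ < ‖⟪v, p⟫_ℂ‖ := by
    rw [← inner_projS_apply_of_mem v hp_mem, inner_self_eq_norm_sq_to_K, norm_pow,
      RCLike.norm_ofReal, abs_norm, sq]
    exact mul_lt_mul_of_pos_right h (hc.trans_lt h)
  have hU : IsOpen {z : H | c * ‖z‖ < ‖⟪v, z⟫_ℂ‖} := isOpen_lt (by fun_prop) (by fun_prop)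
  obtain ⟨z, hzU, hz⟩ := mem_closure_iff_nhds.mp hp _ (hU.mem_nhds hpU)
  exact ⟨z, hz, hzU⟩

lemma Submodule.exists_finset_subset_mem_span_image {R M ι : Type*} [Semiring R]
    [AddCommMonoid M] [Module R M] {x : ι → M} {σ : Set ι} {z : M}
    (hz : z ∈ Submodule.span R (x '' σ)) :
    ∃ G : Finset ι, ↑G ⊆ σ ∧ z ∈ Submodule.span R (x '' G) := by
  classical
  obtain ⟨T, hTσ, hzT⟩ := Submodule.mem_span_finite_of_mem_span hz
  obtain ⟨G, hGσ, rfl⟩ := Finset.subset_set_image_iff.mp hTσ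
  exact ⟨G, hGσ, by simpa using hzT⟩

lemma lowerSemicontinuous_norm_projS_image {ι : Type*} (x : ι → H) (v : H) :
    LowerSemicontinuous fun a : ι → Bool => ‖projS (x '' {k | a k = true}) v‖ := by
  intro a₀ c hc
  rcases lt_or_ge c 0 with hc_neg | hc_nonneg
  · exact .of_forall fun a => hc_neg.trans_le (norm_nonneg _)
  obtain ⟨z, hz, hcz⟩ := exists_mem_span_mul_norm_lt_norm_inner hc_nonneg hc
  obtain ⟨G, hGa₀, hzG⟩ := Submodule.exists_finset_subset_mem_span_image hz
  have hG : ∀ᶠ a in 𝓝 a₀, ∀ k ∈ G, a k = true := (eventually_all_finset G).2 fun k hk =>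
    (continuous_apply k).continuousAt ((isOpen_discrete {true}).mem_nhds (hGa₀ hk))
  filter_upwards [hG] with a ha
  have hza : z ∈ clSpan (x '' {k | a k = true}) :=
    Submodule.le_topologicalClosure _ (Submodule.span_mono (Set.image_mono ha) hzG)
  exact lt_of_mul_lt_mul_right (hcz.trans_le (norm_inner_le_norm_projS_mul v hza))
    (norm_nonneg z)

lemma lowerSemicontinuous_tsum_of_nonneg {α ι : Type*} [TopologicalSpace α] {f : ι → α → ℝ}
    (hf : ∀ i, LowerSemicontinuous (f i)) (hf_nonneg : ∀ i a, 0 ≤ f i a)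
    (hf_sum : ∀ a, Summable fun i => f i a) :
    LowerSemicontinuous fun a => ∑' i, f i a := by
  intro a c hc
  obtain ⟨s, hs⟩ : ∃ s : Finset ι, c < ∑ i ∈ s, f i a :=
    ((hf_sum a).hasSum.eventually (eventually_gt_nhds hc)).exists
  filter_upwards [lowerSemicontinuous_sum (fun i _ => hf i) a c hs] with b hb
  exact hb.trans_le ((hf_sum b).sum_le_tsum s fun i _ => hf_nonneg i b)

theorem ds_lowerSemicontinuous_general
    (x : ℕ → H)
    (hnorm : ∀ k, ‖x k‖ = 1) :
    LowerSemicontinuous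
      (fun a : ℕ → Bool => ∑' j : ℕ, ‖projS (x '' {k | a k = true}) (x j)‖ / 2 ^ j) := by
  refine lowerSemicontinuous_tsum_of_nonneg (fun j => ?_) (fun j a => by positivity) fun a => ?_
  · exact (continuous_id.div_const _).comp_lowerSemicontinuous
      (lowerSemicontinuous_norm_projS_image x (x j))
      fun _ _ h => div_le_div_of_nonneg_right h (by positivity)
  · refine Summable.of_nonneg_of_le (fun j => by positivity) (fun j => ?_) summable_geometric_two
    rw [one_div_pow]
    exact div_le_div_of_nonneg_right ((norm_projS_apply_le _ _).trans_eq (hnorm j)) (by positivity)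

/-- For a normalized complete minimal system, the function `σ ↦ d_s(P_σ, 0)` is lower
semicontinuous on `𝔓(ℕ)` (identified with `ℕ → Bool` with the product topology). -/
theorem ds_lowerSemicontinuous [TopologicalSpace.SeparableSpace H]
    (x : ℕ → H) (hc : IsCompleteSystem x) (hmin : IsMinimalSystem x)
    (hnorm : ∀ k, ‖x k‖ = 1) :
    LowerSemicontinuous
      (fun a : ℕ → Bool => ∑' j : ℕ, ‖projS (x '' {k | a k = true}) (x j)‖ / 2 ^ j) :=
  ds_lowerSemicontinuous_general x hnorm
end
end

section
/- If {x_k} is a hereditarily complete system in H with biorthogonal {x_k*}, then for every σ ⊆ ℕ the mixed system {x_k}_{k∈σ} ∪ {x_k*}_{k∈σ^c} is also hereditarily complete. -/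
open Filter Topology

noncomputable section

variable {H : Type*} [NormedAddCommGroup H] [InnerProductSpace ℂ H] [CompleteSpace H]

theorem image_union_image_compl_of_mixed {ι α : Type*} (x y w w' : ι → α) (σ N : Set ι)
    (hw : ∀ k ∈ σ, w k = x k ∧ w' k = y k) (hw' : ∀ k ∉ σ, w k = y k ∧ w' k = x k) :
    w '' N ∪ w' '' Nᶜ = x '' {k | k ∈ N ↔ k ∈ σ} ∪ y '' {k | k ∈ N ↔ k ∈ σ}ᶜ := by
  ext v
  simp only [Set.mem_union, Set.mem_image, ← exists_or]
  refine exists_congr fun k => ?_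
  by_cases hσ : k ∈ σ
  · obtain ⟨hx, hy⟩ := hw k hσ
    by_cases hN : k ∈ N <;> simp [hx, hy, hσ, hN]
  · obtain ⟨hy, hx⟩ := hw' k hσ
    by_cases hN : k ∈ N <;> simp [hx, hy, hσ, hN]

theorem mixed_of_hereditarily_complete_general
    (x y : ℕ → H)
    (hered : ∀ N : Set ℕ, clSpan (x '' N ∪ y '' Nᶜ) = ⊤)
    (σ : Set ℕ) (w w' : ℕ → H)
    (hw : ∀ k ∈ σ, w k = x k ∧ w' k = y k)
    (hw' : ∀ k ∉ σ, w k = y k ∧ w' k = x k) :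
    ∀ N : Set ℕ, clSpan (w '' N ∪ w' '' Nᶜ) = ⊤ := by
  intro N
  rw [image_union_image_compl_of_mixed x y w w' σ N hw hw']
  exact hered _

/-- Mixed systems of a hereditarily complete system are hereditarily complete: if every mixed
system of `x` (with biorthogonal `y`) is complete, `σ ⊆ ℕ`, and `w` is the mixed system
for `σ` (with its biorthogonal `w'`), then every mixed system of `w` is complete. -/
theorem mixed_of_hereditarily_complete [TopologicalSpace.SeparableSpace H]
    (x y : ℕ → H) (hc : IsCompleteSystem x) (hmin : IsMinimalSystem x)
    (hbi : IsBiorthogonal x y)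
    (hered : ∀ N : Set ℕ, clSpan (x '' N ∪ y '' Nᶜ) = ⊤)
    (σ : Set ℕ) (w w' : ℕ → H)
    (hw : ∀ k ∈ σ, w k = x k ∧ w' k = y k)
    (hw' : ∀ k ∉ σ, w k = y k ∧ w' k = x k) :
    ∀ N : Set ℕ, clSpan (w '' N ∪ w' '' Nᶜ) = ⊤ :=
  mixed_of_hereditarily_complete_general x y hered σ w w' hw hw'
end
end
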